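/- arXiv:2502.17384 — 4 statements merged into one kernel-verified Lean document; each statement's English description precedes it below -/
import Mathlib

section
/- (Per-coordinate fingerprinting with scaling.) Fix n ∈ ℕ, β > 0 and γ ∈ (0,1]. Let f: {±1}^n → ℝ be an arbitrary function and let π = Beta_{[−γ,γ]}(β,β). For p ∈ [−1,1], write X ∼ p^{⊗n} for n i.i.d. ±1-valued random variables with mean p. Then E_{p∼π} E_{X∼p^{⊗n}}[ ((1 − (p/γ)²)/(1 − p²)) · f(X) · Σ_{i=1}^n (X_i − p) ] = (2β/γ²) · E_{p∼π}[ p · E_{X∼p^{⊗n}}[f(X)] ]. -/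
open MeasureTheory ProbabilityTheory

noncomputable section

namespace Trace

/-- The `ℓ_p` norm on `Fin d → ℝ` (for a real exponent `p`). -/
def lpNorm {d : ℕ} (p : ℝ) (x : Fin d → ℝ) : ℝ :=
  (∑ i, |x i| ^ p) ^ (1 / p)

/-- The `ℓ_∞` norm on `Fin d → ℝ`. -/
def linftyNorm {d : ℕ} (x : Fin d → ℝ) : ℝ := ⨆ i, |x i|

/-- A stochastic convex optimization (SCO) problem in dimension `d`:
a data space `Z`, a convex parameter domain `dom ⊆ ℝ^d` and a loss which is
convex in the parameter for every data point. -/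
structure SCOProblem (d : ℕ) where
  Z : Type
  mZ : MeasurableSpace Z
  dom : Set (Fin d → ℝ)
  loss : Z → (Fin d → ℝ) → ℝ
  convex_dom : Convex ℝ dom
  convexOn_loss : ∀ z, ConvexOn ℝ dom (loss z)

attribute [instance] SCOProblem.mZ

/-- `ℓ_p`-Lipschitz-bounded SCO problems: the domain sits inside the unit `ℓ_p`
ball and the loss is `1`-Lipschitz w.r.t. the `ℓ_p` norm. -/
def SCOProblem.IsLipschitzBounded {d : ℕ} (p : ℝ) (P : SCOProblem d) : Prop :=
  (∀ θ ∈ P.dom, lpNorm p θ ≤ 1) ∧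
  ∀ z : P.Z, ∀ θ₁ ∈ P.dom, ∀ θ₂ ∈ P.dom,
    |P.loss z θ₁ - P.loss z θ₂| ≤ lpNorm p (θ₁ - θ₂)

/-- Population risk. -/
def SCOProblem.risk {d : ℕ} (P : SCOProblem d) (D : Measure P.Z) (θ : Fin d → ℝ) : ℝ :=
  ∫ z, P.loss z θ ∂D

/-- Joint law of `(S_n, θ̂)` where `S_n ∼ D^{⊗n}` and `θ̂ ∼ K(S_n)`. -/
def jointMeasure {Z : Type*} [MeasurableSpace Z] {d n : ℕ}
    (D : Measure Z) (K : Kernel (Fin n → Z) (Fin d → ℝ)) :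
    Measure ((Fin n → Z) × (Fin d → ℝ)) :=
  (Measure.pi fun _ : Fin n => D).bind fun s => (K s).map fun θ => (s, θ)

/-- `A_n` is an `α`-learner: it is a Markov kernel, it outputs points of the domain,
and for every data distribution its expected excess risk is at most `α`. -/
def IsAlphaLearner {d n : ℕ} (P : SCOProblem d)
    (K : Kernel (Fin n → P.Z) (Fin d → ℝ)) (α : ℝ) : Prop :=
  IsMarkovKernel K ∧
  (∀ s, ∀ᵐ θ ∂(K s), θ ∈ P.dom) ∧
  ∀ D : Measure P.Z, IsProbabilityMeasure D →
    (∫ x, P.risk D x.2 ∂jointMeasure D K) - (⨅ θ : P.dom, P.risk D θ.1) ≤ α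

/-- Joint law of `(Z_0, Z_1, …, Z_n, θ̂)` where the `Z_i` are i.i.d. from `D` and
`θ̂ ∼ K(Z_1, …, Z_n)` (coordinate `0` is the fresh point). -/
def traceMeasure {Z : Type*} [MeasurableSpace Z] {d n : ℕ}
    (D : Measure Z) (K : Kernel (Fin n → Z) (Fin d → ℝ)) :
    Measure ((Fin (n + 1) → Z) × (Fin d → ℝ)) :=
  (Measure.pi fun _ : Fin (n + 1) => D).bind
    fun zs => (K fun i : Fin n => zs i.succ).map fun θ => (zs, θ)

/-- `(ξ, m)`-traceability of a learning algorithm `K`. -/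
def IsTraceable {Z : Type*} [MeasurableSpace Z] {d n : ℕ}
    (K : Kernel (Fin n → Z) (Fin d → ℝ)) (ξ m : ℝ) : Prop :=
  ∃ (φ : (Fin d → ℝ) → Z → ℝ) (D : Measure Z) (lam : ℝ),
    IsProbabilityMeasure D ∧ Measurable (Function.uncurry φ) ∧
    (traceMeasure D K {x | lam ≤ φ x.2 (x.1 0)}).toReal ≤ ξ ∧
    m ≤ ∫ x, ((Finset.univ.filter fun i : Fin n => lam ≤ φ x.2 (x.1 i.succ)).card : ℝ)
          ∂traceMeasure D K

/-- The subgaussian norm `‖X‖_{ψ₂}` of a real random variable. -/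
def subgNorm {Ω : Type*} [MeasurableSpace Ω] (μ : Measure Ω) (X : Ω → ℝ) : ℝ :=
  sInf {t : ℝ | 0 < t ∧ ∫ ω, Real.exp (X ω ^ 2 / t ^ 2) ∂μ ≤ 2}

/-- Diameter of a set `T` with respect to a norm-like function `N`. -/
def normDiam {d : ℕ} (N : (Fin d → ℝ) → ℝ) (T : Set (Fin d → ℝ)) : ℝ :=
  ⨆ x : T, ⨆ y : T, N (x.1 - y.1)

/-- A `σ`-subgaussian process indexed by `T` with respect to the norm `N`. -/
def IsSubgaussianProcess {Ω : Type*} [MeasurableSpace Ω] {d : ℕ} (μ : Measure Ω) (T : Set (Fin d → ℝ))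
    (N : (Fin d → ℝ) → ℝ) (X : (Fin d → ℝ) → Ω → ℝ) (σ : ℝ) : Prop :=
  (∀ θ ∈ T, ∀ θ' ∈ T, subgNorm μ (fun ω => X θ ω - X θ' ω) ≤ σ * N (θ - θ')) ∧
  ∀ θ ∈ T, subgNorm μ (X θ) ≤ σ * normDiam N T

/-- The Minkowski norm (gauge) of the convex hull of `T ∪ (−T)`. -/
def minkowskiNorm {d : ℕ} (T : Set (Fin d → ℝ)) : (Fin d → ℝ) → ℝ :=
  gauge (convexHull ℝ (T ∪ (fun x => -x) '' T))

/-- A subgaussian tracer at scale `κ` for domain `T`: the scores form a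
`1`-subgaussian process w.r.t. the Minkowski norm of `T`, and are bounded by `κ`. -/
def IsSubgTracer {Z : Type*} [MeasurableSpace Z] {d : ℕ} (T : Set (Fin d → ℝ)) (κ : ℝ)
    (φ : (Fin d → ℝ) → Z → ℝ) (D : Measure Z) : Prop :=
  IsProbabilityMeasure D ∧ Measurable (Function.uncurry φ) ∧
  IsSubgaussianProcess D T (minkowskiNorm T) φ 1 ∧
  ∀ θ ∈ T, ∀ z, |φ θ z| ≤ κ

/-- The subgaussian trace value `Tr_κ(P; n, α)`. -/
def traceValue {d : ℕ} (P : SCOProblem d) (κ : ℝ) (n : ℕ) (α : ℝ) : ℝ :=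
  ⨅ K : {K : Kernel (Fin n → P.Z) (Fin d → ℝ) // IsAlphaLearner P K α},
    ⨆ t : {t : ((Fin d → ℝ) → P.Z → ℝ) × Measure P.Z // IsSubgTracer P.dom κ t.1 t.2},
      ∫ x, (n : ℝ)⁻¹ * ∑ i, t.1.1 x.2 (x.1 i) ∂jointMeasure t.1.2 K.1

/-- `(ε, δ)`-differential privacy of a learning algorithm. -/
def IsDP {Z : Type*} [MeasurableSpace Z] {d n : ℕ}
    (K : Kernel (Fin n → Z) (Fin d → ℝ)) (ε δ : ℝ) : Prop :=
  ∀ s s' : Fin n → Z, (∃ j, ∀ i, i ≠ j → s i = s' i) →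
    ∀ M : Set (Fin d → ℝ), MeasurableSet M →
      (K s M).toReal ≤ Real.exp ε * (K s' M).toReal + δ

/-- Support of a vector, as a finset of coordinates. -/
def sparseSupport {d : ℕ} (z : Fin d → ℝ) : Finset (Fin d) :=
  Finset.univ.filter fun i => z i ≠ 0

/-- `Z_k`: sign vectors with exactly `k` nonzero coordinates. -/
def SparseZ (d k : ℕ) : Set (Fin d → ℝ) :=
  {z | (∀ i, z i = 0 ∨ z i = 1 ∨ z i = -1) ∧ (sparseSupport z).card = k}

lemma convex_linftyBall {d : ℕ} (r : ℝ) :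
    Convex ℝ {θ : Fin d → ℝ | ∀ i, |θ i| ≤ r} := by
  intro x hx y hy a b ha hb hab
  intro i
  have h0 : (a • x + b • y) i = a * x i + b * y i := rfl
  have h1 : |a * x i + b * y i| ≤ a * |x i| + b * |y i| := by
    calc |a * x i + b * y i| ≤ |a * x i| + |b * y i| := abs_add_le _ _
      _ = a * |x i| + b * |y i| := by
          rw [abs_mul, abs_mul, abs_of_nonneg ha, abs_of_nonneg hb]
  have h2 : a * |x i| + b * |y i| ≤ a * r + b * r := by
    have hx' := hx i
    have hy' := hy i
    gcongr
  have h3 : a * r + b * r = r := by rw [← add_mul, hab, one_mul]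
  rw [h0]
  linarith

lemma convexOn_negInner {d : ℕ} {S : Set (Fin d → ℝ)} (hS : Convex ℝ S)
    (c : ℝ) (v : Fin d → ℝ) :
    ConvexOn ℝ S fun θ => -(c * ∑ i, θ i * v i) := by
  refine ⟨hS, fun x _ y _ a b ha hb hab => le_of_eq ?_⟩
  have h : ∑ i, (a • x + b • y) i * v i
      = a * ∑ i, x i * v i + b * ∑ i, y i * v i := by
    rw [Finset.mul_sum, Finset.mul_sum, ← Finset.sum_add_distrib]
    refine Finset.sum_congr rfl fun i _ => ?_
    simp only [Pi.add_apply, Pi.smul_apply, smul_eq_mul]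
    ring
  simp only [smul_eq_mul]
  rw [h]
  ring

/-- The hard problem `P_{k,p}`: `Θ` the `ℓ_∞` ball of radius `d^{-1/p}`, data space
`Z_k`, and loss `f(θ, z) = -k^{1/p - 1}⟨θ, z⟩` (note `k^{-1/q} = k^{1/p-1}`). -/
def hardProblem (d k : ℕ) (p : ℝ) : SCOProblem d where
  Z := ↥(SparseZ d k)
  mZ := inferInstance
  dom := {θ | ∀ i, |θ i| ≤ (d : ℝ) ^ (-(1 : ℝ) / p)}
  loss := fun z θ => -((k : ℝ) ^ ((1 : ℝ) / p - 1) * ∑ i, θ i * z.1 i)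
  convex_dom := convex_linftyBall _
  convexOn_loss := fun z => convexOn_negInner (convex_linftyBall _) _ _

/-- The sparse distribution `D_{μ,k}` on `Z_k` with mean `μ`. -/
def sparseDist (d k : ℕ) (μ : Fin d → ℝ) : Measure ↥(SparseZ d k) :=
  Measure.sum fun z : ↥(SparseZ d k) =>
    (ENNReal.ofReal ((d.choose k : ℝ)⁻¹ *
        ∏ j ∈ sparseSupport z.1, (1 + (d : ℝ) / k * μ j * z.1 j) / 2)) •
      Measure.dirac z

/-- The fingerprinting score `φ_μ(θ, z) = ∑_{j ∈ supp z} θ^j (z^j − (d/k) μ^j)`. -/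
def sparsePhi (d k : ℕ) (μ θ : Fin d → ℝ) (z : ↥(SparseZ d k)) : ℝ :=
  ∑ j ∈ sparseSupport z.1, θ j * (z.1 j - (d : ℝ) / k * μ j)

/-- The `{±1}`-valued distribution with mean `m` (on `Bool`; `true ↦ 1`, `false ↦ -1`). -/
def signMeasure (m : ℝ) : Measure Bool :=
  ENNReal.ofReal ((1 + m) / 2) • Measure.dirac true +
    ENNReal.ofReal ((1 - m) / 2) • Measure.dirac false

/-- Embedding of boolean vectors as `{±1}`-vectors. -/
def signVec {n : ℕ} (z : Fin n → Bool) : Fin n → ℝ := fun i => if z i then 1 else -1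

/-- Normalizing constant `B(β) = 2^{2β−1} Γ(β)² / Γ(2β)` of the symmetric beta
distribution. -/
def betaNormConst (β : ℝ) : ℝ :=
  2 ^ (2 * β - 1) * Real.Gamma β ^ 2 / Real.Gamma (2 * β)

/-- The symmetric beta distribution on `[−γ, γ]` with parameter `β`, i.e. with
density `x ↦ (1 − (x/γ)²)^{β−1} / (γ B(β))` on `[−γ, γ]`. -/
def symmBeta (β γ : ℝ) : Measure ℝ :=
  (ENNReal.ofReal (γ * betaNormConst β))⁻¹ •
    ((volume.restrict (Set.Icc (-γ) γ)).withDensity fun x =>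
      ENNReal.ofReal ((1 - (x / γ) ^ 2) ^ (β - 1)))

end Trace

/-!
Let `g p = ∑ X, (∏ i, (1 + p Xᵢ) / 2) f X`, which is `E_{X∼p^{⊗n}} f(X)` for `p ∈ [-1, 1]`.
Differentiating the product mass coordinatewise and using `Xᵢ² = 1` gives the score identity
`E[f(X) ∑ᵢ (Xᵢ - p)] = (1 - p²) g'(p)`. Against the density `(1 - (p/γ)²)^(β-1)` the weight
`(1 - (p/γ)²) / (1 - p²)` turns the left-hand side into `∫ (1 - (p/γ)²)^β g'(p) dp` over `[-γ, γ]`,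
and integrating by parts (the boundary terms vanish as `β > 0`) with
`d/dp (1 - (p/γ)²)^β = -(2β/γ²) p (1 - (p/γ)²)^(β-1)` gives the right-hand side.
-/

open MeasureTheory Set

namespace Trace

lemma signMeasure_singleton (p : ℝ) (b : Bool) :
    signMeasure p {b} = ENNReal.ofReal ((1 + p * if b then 1 else -1) / 2) := by
  cases b <;> simp [signMeasure, sub_eq_add_neg]

lemma isProbabilityMeasure_signMeasure {p : ℝ} (hp : p ∈ Icc (-1 : ℝ) 1) :
    IsProbabilityMeasure (signMeasure p) := by
  obtain ⟨h₁, h₂⟩ := hp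
  constructor
  simp only [signMeasure, Measure.coe_add, Measure.coe_smul, Pi.add_apply, Pi.smul_apply,
    measure_univ, smul_eq_mul, mul_one]
  rw [← ENNReal.ofReal_add (by linarith) (by linarith)]
  ring_nf
  exact ENNReal.ofReal_one

lemma signVec_sq {n : ℕ} (X : Fin n → Bool) (i : Fin n) : signVec X i ^ 2 = 1 := by
  unfold signVec; split_ifs <;> norm_num

variable {n : ℕ}

def signMass (p : ℝ) (X : Fin n → Bool) : ℝ := ∏ i, (1 + p * signVec X i) / 2

lemma integral_pi_signMeasure {p : ℝ} (hp : p ∈ Icc (-1 : ℝ) 1) (φ : (Fin n → Bool) → ℝ) :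
    ∫ X, φ X ∂(Measure.pi fun _ : Fin n => signMeasure p) = ∑ X, signMass p X * φ X := by
  have := isProbabilityMeasure_signMeasure hp
  rw [integral_fintype .of_finite]
  refine Finset.sum_congr rfl fun X _ => ?_
  have hmass : ∀ i, 0 ≤ (1 + p * signVec X i) / 2 := fun i => by
    unfold signVec; split_ifs <;> linarith [hp.1, hp.2]
  rw [Measure.real, ← univ_pi_singleton, Measure.pi_pi, ENNReal.toReal_prod, smul_eq_mul]
  congr 1
  exact Finset.prod_congr rfl fun i _ => by
    rw [signMeasure_singleton]; exact ENNReal.toReal_ofReal (hmass i)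

lemma hasDerivAt_signMass (p : ℝ) (X : Fin n → Bool) :
    HasDerivAt (signMass · X)
      (∑ i, (∏ j ∈ Finset.univ.erase i, (1 + p * signVec X j) / 2) * (signVec X i / 2)) p := by
  have := HasDerivAt.fun_finsetProd (u := Finset.univ) (f := fun i q => (1 + q * signVec X i) / 2)
    fun i _ => (((hasDerivAt_id' p).mul_const (signVec X i)).const_add 1).div_const 2
  simp only [smul_eq_mul, one_mul] at this
  exact this

lemma one_sub_sq_mul_deriv_signMass (p : ℝ) (X : Fin n → Bool) :
    (1 - p ^ 2) * deriv (signMass · X) p = signMass p X * ∑ i, (signVec X i - p) := by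
  rw [(hasDerivAt_signMass p X).deriv, Finset.mul_sum, Finset.mul_sum]
  refine Finset.sum_congr rfl fun i _ => ?_
  rw [signMass, ← Finset.mul_prod_erase _ _ (Finset.mem_univ i)]
  linear_combination -(∏ j ∈ Finset.univ.erase i, (1 + p * signVec X j) / 2) * (p / 2) *
    signVec_sq X i

lemma contDiff_sum_signMass_mul (f : (Fin n → Bool) → ℝ) :
    ContDiff ℝ 1 fun p => ∑ X, signMass p X * f X := by
  unfold signMass; fun_prop

theorem integral_mul_sum_sub_eq_deriv {p : ℝ} (hp : p ∈ Icc (-1 : ℝ) 1)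
    (f : (Fin n → Bool) → ℝ) :
    ∫ X, f X * ∑ i, (signVec X i - p) ∂(Measure.pi fun _ : Fin n => signMeasure p)
      = (1 - p ^ 2) * deriv (fun q => ∑ X, signMass q X * f X) p := by
  rw [integral_pi_signMeasure hp, deriv_fun_sum fun X _ =>
    ((hasDerivAt_signMass p X).mul_const (f X)).differentiableAt, Finset.mul_sum]
  refine Finset.sum_congr rfl fun X _ => ?_
  rw [deriv_mul_const (hasDerivAt_signMass p X).differentiableAt, ← mul_assoc (1 - p ^ 2),
    one_sub_sq_mul_deriv_signMass]
  ring

lemma one_sub_div_sq_nonneg {γ p : ℝ} (hp : p ∈ Icc (-γ) γ) : 0 ≤ 1 - (p / γ) ^ 2 := by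
  rw [div_pow, sub_nonneg]
  exact div_le_one_of_le₀ (sq_le_sq' hp.1 hp.2) (sq_nonneg γ)

lemma intervalIntegrable_one_sub_sq_rpow {s : ℝ} (hs : -1 < s) :
    IntervalIntegrable (fun x => (1 - x ^ 2) ^ s) volume (-1) 1 := by
  have hright : IntervalIntegrable (fun x => (1 - x ^ 2) ^ s) volume 0 1 := by
    have hsing : IntervalIntegrable (fun x => (1 - x) ^ s) volume 0 1 := by
      simpa using (intervalIntegral.intervalIntegrable_rpow' (a := 1) (b := 0) hs).comp_sub_left 1
    refine (hsing.mul_continuousOn (g := fun x => (1 + x) ^ s) ?_).congr fun x hx => ?_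
    · exact ContinuousOn.rpow_const (by fun_prop) fun x hx => Or.inl (by
        rw [uIcc_of_le zero_le_one] at hx; linarith [hx.1])
    · rw [uIoc_of_le zero_le_one] at hx
      rw [← Real.mul_rpow (by linarith [hx.2]) (by linarith [hx.1])]
      ring_nf
  have hleft : IntervalIntegrable (fun x => (1 - x ^ 2) ^ s) volume (-1) 0 := by
    simpa using ((IntervalIntegrable.iff_comp_neg).mp hright).symm
  exact hleft.trans hright

lemma intervalIntegrable_one_sub_div_sq_rpow {γ s : ℝ} (hs : -1 < s) :
    IntervalIntegrable (fun p => (1 - (p / γ) ^ 2) ^ s) volume (-γ) γ := by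
  simpa [div_eq_inv_mul] using
    (intervalIntegrable_one_sub_sq_rpow hs).comp_mul_left (c := γ⁻¹)

lemma integral_symmBeta (β γ : ℝ) (h : ℝ → ℝ) :
    ∫ p, h p ∂symmBeta β γ = (ENNReal.ofReal (γ * betaNormConst β))⁻¹.toReal *
      ∫ p in Icc (-γ) γ, (1 - (p / γ) ^ 2) ^ (β - 1) * h p := by
  rw [symmBeta, integral_smul_measure, smul_eq_mul,
    integral_withDensity_eq_integral_toReal_smul (by fun_prop) (by simp)]
  congr 1
  refine setIntegral_congr_fun measurableSet_Icc fun p hp => ?_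
  rw [ENNReal.toReal_ofReal (Real.rpow_nonneg (one_sub_div_sq_nonneg hp) _), smul_eq_mul]

theorem integral_one_sub_div_sq_rpow_mul_deriv {β γ : ℝ} (hβ : 0 < β) (hγ : 0 < γ) {g : ℝ → ℝ}
    (hg : ContDiff ℝ 1 g) :
    ∫ p in Icc (-γ) γ, (1 - (p / γ) ^ 2) ^ β * deriv g p
      = 2 * β / γ ^ 2 * ∫ p in Icc (-γ) γ, (1 - (p / γ) ^ 2) ^ (β - 1) * (p * g p) := by
  have hle : -γ ≤ γ := by linarith
  have hvanish : ∀ p ∈ ({-γ, γ} : Set ℝ), (1 - (p / γ) ^ 2) ^ β = 0 := by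
    rintro p (rfl | rfl) <;> simp [neg_div, div_self hγ.ne', Real.zero_rpow hβ.ne']
  have hderiv : ∀ p ∈ Ioo (min (-γ) γ) (max (-γ) γ), HasDerivAt (fun p => (1 - (p / γ) ^ 2) ^ β)
      (-(2 * β / γ ^ 2) * (1 - (p / γ) ^ 2) ^ (β - 1) * p) p := by
    intro p hp
    rw [min_eq_left hle, max_eq_right hle] at hp
    have hpos : 0 < 1 - (p / γ) ^ 2 := by
      rw [div_pow, sub_pos, div_lt_one (by positivity)]
      exact sq_lt_sq' hp.1 hp.2
    refine ((((hasDerivAt_id' p).div_const γ).fun_pow 2).const_sub 1).rpow_const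
      (Or.inl hpos.ne') |>.congr_deriv ?_
    push_cast
    ring
  have hibp := intervalIntegral.integral_mul_deriv_eq_deriv_mul_of_hasDerivAt
    (ContinuousOn.rpow_const (by fun_prop) fun _ _ => Or.inr hβ.le)
    hg.continuous.continuousOn hderiv
    (fun p _ => ((hg.differentiable one_ne_zero) p).hasDerivAt)
    (((intervalIntegrable_one_sub_div_sq_rpow (γ := γ) (by linarith)).const_mul _).mul_continuousOn
      continuousOn_id)
    ((hg.continuous_deriv le_rfl).intervalIntegrable _ _)
  rw [integral_Icc_eq_integral_Ioc, integral_Icc_eq_integral_Ioc,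
    ← intervalIntegral.integral_of_le hle, ← intervalIntegral.integral_of_le hle, hibp,
    hvanish _ (by simp), hvanish _ (by simp), ← intervalIntegral.integral_const_mul]
  simp only [zero_mul, sub_zero, zero_sub, ← intervalIntegral.integral_neg]
  congr 1 with p
  ring

lemma one_sub_div_sq_rpow_mul_integral_eq_rpow_mul_deriv {β γ p : ℝ} (hβ : 0 < β) (hγ : γ ≤ 1)
    (hp : p ∈ Icc (-γ) γ) {n : ℕ} (f : (Fin n → Bool) → ℝ) :
    (1 - (p / γ) ^ 2) ^ (β - 1) * ∫ X, (1 - (p / γ) ^ 2) / (1 - p ^ 2) * f X *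
        ∑ i, (signVec X i - p) ∂(Measure.pi fun _ : Fin n => signMeasure p)
      = (1 - (p / γ) ^ 2) ^ β * deriv (fun q => ∑ X, signMass q X * f X) p := by
  simp_rw [mul_assoc]
  rw [integral_const_mul, integral_mul_sum_sub_eq_deriv (Icc_subset_Icc (neg_le_neg hγ) hγ hp)]
  rcases eq_or_ne (1 - (p / γ) ^ 2) 0 with hb | hb
  · simp [hb, Real.zero_rpow hβ.ne']
  · -- `1 - p² = 0` would force `p = ±γ = ±1`, where Lean's `x / 0 = 0` hides the `0 / 0`.
    have hp1 : 1 - p ^ 2 ≠ 0 := fun hp1 => hb <| by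
      have hγ0 : 0 ≤ γ := by linarith [hp.1, hp.2]
      have hpγ : p ^ 2 ≤ γ ^ 2 := sq_le_sq' hp.1 hp.2
      have hγ1 : γ ^ 2 ≤ 1 := pow_le_one₀ hγ0 hγ
      rw [div_pow, show γ ^ 2 = p ^ 2 by linarith, div_self (by linarith)]
      ring
    rw [Real.rpow_sub_one hb]
    generalize 1 - (p / γ) ^ 2 = b at hb ⊢
    field_simp

end Trace

open MeasureTheory ProbabilityTheory in
/-- per-coordinate fingerprinting lemma with scaling. -/
theorem per_coordinate_fingerprinting (n : ℕ) (β γ : ℝ) (hβ : 0 < β)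
    (hγ0 : 0 < γ) (hγ1 : γ ≤ 1) (f : (Fin n → Bool) → ℝ) :
    (∫ p, (∫ X, (1 - (p / γ) ^ 2) / (1 - p ^ 2) * f X * ∑ i, (Trace.signVec X i - p)
        ∂(Measure.pi fun _ : Fin n => Trace.signMeasure p))
      ∂Trace.symmBeta β γ)
    = 2 * β / γ ^ 2 *
      ∫ p, p * ∫ X, f X ∂(Measure.pi fun _ : Fin n => Trace.signMeasure p)
        ∂Trace.symmBeta β γ := by
  open Trace in
  have hL : ∫ p in Icc (-γ) γ, (1 - (p / γ) ^ 2) ^ (β - 1) *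
        ∫ X, (1 - (p / γ) ^ 2) / (1 - p ^ 2) * f X * ∑ i, (signVec X i - p)
          ∂(Measure.pi fun _ : Fin n => signMeasure p)
      = ∫ p in Icc (-γ) γ, (1 - (p / γ) ^ 2) ^ β * deriv (fun q => ∑ X, signMass q X * f X) p :=
    setIntegral_congr_fun measurableSet_Icc fun p hp =>
      one_sub_div_sq_rpow_mul_integral_eq_rpow_mul_deriv hβ hγ1 hp f
  have hR : ∫ p in Icc (-γ) γ, (1 - (p / γ) ^ 2) ^ (β - 1) *
        (p * ∫ X, f X ∂(Measure.pi fun _ : Fin n => signMeasure p))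
      = ∫ p in Icc (-γ) γ, (1 - (p / γ) ^ 2) ^ (β - 1) * (p * ∑ X, signMass p X * f X) :=
    setIntegral_congr_fun measurableSet_Icc fun p hp => by
      rw [integral_pi_signMeasure (Icc_subset_Icc (neg_le_neg hγ1) hγ1 hp)]
  rw [integral_symmBeta, integral_symmBeta, hL, hR,
    integral_one_sub_div_sq_rpow_mul_deriv hβ hγ0 (contDiff_sum_signMass_mul f)]
  ring
end
end

section
/- Fix d, n ∈ ℕ, k ∈ [d], p ∈ [1,∞) with Hölder conjugate q, and α > 0. Let A_n be an α-learner for the hard problem P_{k,p}, and let D be any probability distribution on Z_k with mean μ = E_{Z∼D}[Z]. Then E_{S_n∼D^{⊗n}, θ̂∼A_n(S_n)}[⟨μ, θ̂⟩] ≥ d^{−1/p}·‖μ‖₁ − k^{1/q}·α. -/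
open MeasureTheory ProbabilityTheory

noncomputable section

/-!
The population risk of `P_{k,p}` is the linear functional `θ ↦ -k^{-1/q} ⟪θ, μ⟫`. By `ℓ₁`–`ℓ∞`
duality its infimum over the cube `‖θ‖_∞ ≤ d^{-1/p}` is `-k^{-1/q} d^{-1/p} ‖μ‖₁`, attained at
`d^{-1/p} sign μ`, so the excess-risk guarantee of an `α`-learner says exactly
`k^{-1/q} (d^{-1/p} ‖μ‖₁ - 𝔼⟪μ, θ̂⟫) ≤ α`.
-/

theorem Finset.sum_mul_le_mul_sum_abs {ι : Type*} (s : Finset ι) {θ μ : ι → ℝ} {r : ℝ}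
    (hθ : ∀ i ∈ s, |θ i| ≤ r) : ∑ i ∈ s, θ i * μ i ≤ r * ∑ i ∈ s, |μ i| := by
  rw [Finset.mul_sum]
  refine Finset.sum_le_sum fun i hi => ?_
  calc θ i * μ i ≤ |θ i| * |μ i| := by rw [← abs_mul]; exact le_abs_self _
    _ ≤ r * |μ i| := mul_le_mul_of_nonneg_right (hθ i hi) (abs_nonneg _)

theorem abs_mul_sign_le {r : ℝ} (hr : 0 ≤ r) (x : ℝ) : |r * SignType.sign x| ≤ r := by
  rw [abs_mul, abs_of_nonneg hr]
  rcases SignType.sign x with _ | _ | _ <;> simp [hr]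

namespace Trace

variable {d k : ℕ} {p : ℝ}

theorem integrable_hardProblem_coord (D : Measure (hardProblem d k p).Z) [IsFiniteMeasure D]
    (i : Fin d) : Integrable (fun z : (hardProblem d k p).Z => z.1 i) D := by
  refine Integrable.of_bound
    ((measurable_pi_apply i).comp measurable_subtype_coe).aestronglyMeasurable 1
    (Filter.Eventually.of_forall fun z => ?_)
  rcases z.2.1 i with h | h | h <;> simp [h]

section

variable (D : Measure (hardProblem d k p).Z) [IsFiniteMeasure D]

theorem hardProblem_risk (θ : Fin d → ℝ) :
    (hardProblem d k p).risk D θ =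
      -((k : ℝ) ^ ((1 : ℝ) / p - 1) * ∑ i, θ i * ∫ z, z.1 i ∂D) := by
  have hsum : ∫ z, ∑ i, θ i * z.1 i ∂D = ∑ i, θ i * ∫ z, z.1 i ∂D := by
    rw [integral_finsetSum _ fun i _ => (integrable_hardProblem_coord D i).const_mul (θ i)]
    simp only [integral_const_mul]
  rw [← hsum, ← integral_const_mul, ← integral_neg]
  rfl

theorem sign_mem_hardProblem_dom (μ : Fin d → ℝ) :
    (fun j => (d : ℝ) ^ (-(1 : ℝ) / p) * SignType.sign (μ j)) ∈ (hardProblem d k p).dom :=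
  fun j => abs_mul_sign_le (Real.rpow_nonneg d.cast_nonneg _) (μ j)

theorem iInf_hardProblem_risk_le :
    ⨅ θ : (hardProblem d k p).dom, (hardProblem d k p).risk D θ.1 ≤
      -((k : ℝ) ^ ((1 : ℝ) / p - 1) *
        ((d : ℝ) ^ (-(1 : ℝ) / p) * ∑ i, |∫ z, z.1 i ∂D|)) := by
  have hbdd : BddBelow (Set.range fun θ : (hardProblem d k p).dom =>
      (hardProblem d k p).risk D θ.1) := by
    refine ⟨-((k : ℝ) ^ ((1 : ℝ) / p - 1) *
      ((d : ℝ) ^ (-(1 : ℝ) / p) * ∑ i, |∫ z, z.1 i ∂D|)), ?_⟩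
    rintro _ ⟨θ, rfl⟩
    dsimp only
    rw [hardProblem_risk, neg_le_neg_iff]
    exact mul_le_mul_of_nonneg_left (Finset.sum_mul_le_mul_sum_abs _ fun i _ => θ.2 i)
      (Real.rpow_nonneg k.cast_nonneg _)
  refine (ciInf_le hbdd ⟨_, sign_mem_hardProblem_dom fun i => ∫ z, z.1 i ∂D⟩).trans_eq ?_
  simp only [hardProblem_risk, mul_assoc, sign_mul_self, ← Finset.mul_sum]

theorem integral_hardProblem_risk {X : Type*} [MeasurableSpace X]
    (ν : Measure (X × (Fin d → ℝ))) :
    ∫ x, (hardProblem d k p).risk D x.2 ∂ν =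
      -((k : ℝ) ^ ((1 : ℝ) / p - 1) * ∫ x, ∑ i, (∫ z, z.1 i ∂D) * x.2 i ∂ν) := by
  simp only [hardProblem_risk, integral_neg, integral_const_mul, mul_comm]

end

theorem IsAlphaLearner.hardProblem_correlation_le {n : ℕ} {α : ℝ}
    {K : Kernel (Fin n → (hardProblem d k p).Z) (Fin d → ℝ)}
    (hK : IsAlphaLearner (hardProblem d k p) K α) (D : Measure (hardProblem d k p).Z)
    (hD : IsProbabilityMeasure D) :
    (k : ℝ) ^ ((1 : ℝ) / p - 1) * ((d : ℝ) ^ (-(1 : ℝ) / p) * ∑ i, |∫ z, z.1 i ∂D|) -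
      (k : ℝ) ^ ((1 : ℝ) / p - 1) * ∫ x, ∑ i, (∫ z, z.1 i ∂D) * x.2 i ∂jointMeasure D K ≤ α := by
  have h := hK.2.2 D hD
  rw [integral_hardProblem_risk] at h
  linarith [iInf_hardProblem_risk_le D]

end Trace

open MeasureTheory ProbabilityTheory in
theorem alpha_learner_mean_correlation_general (d n k : ℕ) (hk1 : 1 ≤ k)
    (p q : ℝ) (hq : 1 / q = 1 - 1 / p) (α : ℝ)
    (K : Kernel (Fin n → ↥(Trace.SparseZ d k)) (Fin d → ℝ))
    (hK : Trace.IsAlphaLearner (Trace.hardProblem d k p) K α)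
    (D : Measure ↥(Trace.SparseZ d k)) (hD : IsProbabilityMeasure D)
    (μ : Fin d → ℝ) (hμ : ∀ j, μ j = ∫ z, z.1 j ∂D) :
    (d : ℝ) ^ (-(1 : ℝ) / p) * (∑ j, |μ j|) - (k : ℝ) ^ ((1 : ℝ) / q) * α ≤
      ∫ x, ∑ j, μ j * x.2 j ∂Trace.jointMeasure D K := by
  set c := (k : ℝ) ^ ((1 : ℝ) / p - 1)
  have hc : 0 < c := Real.rpow_pos_of_pos (by exact_mod_cast hk1) _
  have hkq : (k : ℝ) ^ ((1 : ℝ) / q) = c⁻¹ := by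
    rw [hq, ← Real.rpow_neg k.cast_nonneg, neg_sub]
  obtain rfl : μ = fun j => ∫ z, z.1 j ∂D := funext hμ
  -- restated over `↥(SparseZ d k)`, to which `(hardProblem d k p).Z` unfolds
  have h : c * ((d : ℝ) ^ (-(1 : ℝ) / p) * ∑ j, |∫ z, z.1 j ∂D|) -
      c * ∫ x, ∑ j, (∫ z, z.1 j ∂D) * x.2 j ∂Trace.jointMeasure D K ≤ α :=
    hK.hardProblem_correlation_le D hD
  rw [hkq, sub_le_comm, inv_mul_eq_div, le_div_iff₀ hc]
  linarith

open MeasureTheory ProbabilityTheory in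
/-- Proposition `prop:learners-properies`: an `α`-learner for
`P_{k,p}` correlates with the distribution mean. -/
theorem alpha_learner_mean_correlation (d n k : ℕ) (hk1 : 1 ≤ k) (hkd : k ≤ d)
    (p q : ℝ) (hp : 1 ≤ p) (hq : 1 / q = 1 - 1 / p) (α : ℝ) (hα : 0 < α)
    (K : Kernel (Fin n → ↥(Trace.SparseZ d k)) (Fin d → ℝ))
    (hK : Trace.IsAlphaLearner (Trace.hardProblem d k p) K α)
    (D : Measure ↥(Trace.SparseZ d k)) (hD : IsProbabilityMeasure D)
    (μ : Fin d → ℝ) (hμ : ∀ j, μ j = ∫ z, z.1 j ∂D) :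
    (d : ℝ) ^ (-(1 : ℝ) / p) * (∑ j, |μ j|) - (k : ℝ) ^ ((1 : ℝ) / q) * α ≤
      ∫ x, ∑ j, μ j * x.2 j ∂Trace.jointMeasure D K :=
  alpha_learner_mean_correlation_general d n k hk1 p q hq α K hK D hD μ hμ
end
end

section
/- Fix d ∈ ℕ, k ∈ [d], p ∈ [1,∞), and μ ∈ [−k/d, k/d]^d. Let Θ = {θ ∈ ℝ^d : ‖θ‖_∞ ≤ d^{−1/p}} and define φ(θ,z) = (d^{1/p}/√k)·Σ_{j∈supp(z)} θ^j·(z^j − (d/k)·μ^j). Then there is a universal constant C > 0 such that, for Z ∼ D_{μ,k}, the collection {φ(θ,Z)}_{θ∈Θ} is a C-subgaussian process with respect to (Θ, ‖·‖_Θ). -/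
open MeasureTheory ProbabilityTheory

noncomputable section

/-!
Fix a direction `v`. Given the support `J` of `Z ∼ D_{μ,k}`, the coordinates `Z^j`, `j ∈ J`, are
independent signs with means `(d/k) μ^j`, so by Hoeffding's lemma each summand
`v^j (Z^j - (d/k) μ^j)` of `φ(v, Z)` has moment generating function at most
`exp (‖v‖_∞² t² / 2)`. Multiplying over the `k` coordinates of `J` and averaging over `J` shows
that `φ(v, ·)` is sub-Gaussian with variance proxy `k ‖v‖_∞²`. Averaging the MGF bound against a
Gaussian, through `exp (s² / t²) = π^{-1/2} ∫ exp (2 x s / t) exp (-x²) dx`, turns it into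
`‖φ(v, ·)‖_{ψ₂} ≤ √(3k) ‖v‖_∞`. Since `φ` is linear in `θ` and `‖·‖_Θ = d^{1/p} ‖·‖_∞`, the
normalised process is `√3`-subgaussian.
-/

open Real

lemma integral_exp_mul_sub_sq (c : ℝ) :
    ∫ x : ℝ, exp (c * x - x ^ 2) = √π * exp (c ^ 2 / 4) := by
  have hsq : ∀ x, exp (c * x - x ^ 2) = exp (c ^ 2 / 4) * exp (-1 * (x - c / 2) ^ 2) := by
    intro x
    rw [← exp_add]
    ring_nf
  simp_rw [hsq]
  rw [integral_const_mul, integral_sub_right_eq_self (fun x => exp (-1 * x ^ 2)) (c / 2),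
    integral_gaussian, div_one, mul_comm]

/-- The Hubbard–Stratonovich identity. -/
lemma exp_sq_div_sq_eq_integral (s : ℝ) {t : ℝ} (ht : t ≠ 0) :
    exp (s ^ 2 / t ^ 2) = (√π)⁻¹ * ∫ x : ℝ, exp (2 * x / t * s) * exp (-x ^ 2) := by
  have hlin : ∀ x, exp (2 * x / t * s) * exp (-x ^ 2) = exp (2 * s / t * x - x ^ 2) := by
    intro x
    rw [← exp_add]
    ring_nf
  simp_rw [hlin]
  rw [integral_exp_mul_sub_sq, ← mul_assoc, inv_mul_cancel₀ (by positivity), one_mul]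
  congr 1
  field_simp
  ring

namespace ProbabilityTheory.HasSubgaussianMGF

open scoped NNReal

variable {Ω : Type*} [MeasurableSpace Ω] {μ : Measure Ω} {X : Ω → ℝ} {c : ℝ≥0}

lemma isFiniteMeasure (h : HasSubgaussianMGF X c μ) : IsFiniteMeasure μ :=
  (integrable_const_iff_isFiniteMeasure one_ne_zero).1 (by simpa using h.integrable_exp_mul 0)

lemma mgf_mul_exp_neg_sq_le (h : HasSubgaussianMGF X c μ) {t : ℝ} (ht : 0 < t)
    (hct : 3 * c ≤ t ^ 2) (x : ℝ) :
    mgf X μ (2 * x / t) * exp (-x ^ 2) ≤ exp (-(1 / 3) * x ^ 2) := by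
  have hct' : (c : ℝ) / t ^ 2 ≤ 1 / 3 := by
    rw [div_le_iff₀ (by positivity)]
    linarith
  calc mgf X μ (2 * x / t) * exp (-x ^ 2)
      ≤ exp (c * (2 * x / t) ^ 2 / 2) * exp (-x ^ 2) := by gcongr; exact h.mgf_le _
    _ = exp ((2 * (c / t ^ 2) - 1) * x ^ 2) := by
        rw [← exp_add]
        field_simp
        ring_nf
    _ ≤ exp (-(1 / 3) * x ^ 2) := by
        gcongr
        linarith

lemma integrable_mgf_mul_exp_neg_sq (h : HasSubgaussianMGF X c μ) {t : ℝ} (ht : 0 < t)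
    (hct : 3 * c ≤ t ^ 2) :
    Integrable fun x => mgf X μ (2 * x / t) * exp (-x ^ 2) := by
  refine (integrable_exp_neg_mul_sq (by norm_num : (0 : ℝ) < 1 / 3)).mono' ?_
    (.of_forall fun x => ?_)
  · exact (((continuous_mgf h.integrable_exp_mul).comp (by fun_prop)).mul
      (by fun_prop)).aestronglyMeasurable
  · rw [norm_of_nonneg (mul_nonneg mgf_nonneg (exp_pos _).le)]
    exact h.mgf_mul_exp_neg_sq_le ht hct x

lemma integrable_prod_exp_mul_mul_exp_neg_sq (h : HasSubgaussianMGF X c μ) {t : ℝ} (ht : 0 < t)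
    (hct : 3 * c ≤ t ^ 2) :
    Integrable (fun p : Ω × ℝ => exp (2 * p.2 / t * X p.1) * exp (-p.2 ^ 2))
      (μ.prod volume) := by
  have := h.isFiniteMeasure
  have hX : AEMeasurable (fun p : Ω × ℝ => X p.1) (μ.prod volume) := h.aemeasurable.comp_fst
  have hmeas : AEMeasurable (fun p : Ω × ℝ => exp (2 * p.2 / t * X p.1) * exp (-p.2 ^ 2))
      (μ.prod volume) :=
    (measurable_exp.comp_aemeasurable
      (((measurable_snd.aemeasurable.const_mul 2).div_const t).mul hX)).mul
      (measurable_exp.comp (measurable_snd.pow_const 2).neg).aemeasurable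
  refine (integrable_prod_iff' hmeas.aestronglyMeasurable).2
    ⟨.of_forall fun x => (h.integrable_exp_mul (2 * x / t)).mul_const (exp (-x ^ 2)), ?_⟩
  simp_rw [norm_of_nonneg (mul_nonneg (exp_pos _).le (exp_pos _).le), integral_mul_const]
  exact h.integrable_mgf_mul_exp_neg_sq ht hct

lemma integral_exp_sq_div_sq_le_two (h : HasSubgaussianMGF X c μ) {t : ℝ} (ht : 0 < t)
    (hct : 3 * c ≤ t ^ 2) :
    ∫ ω, exp (X ω ^ 2 / t ^ 2) ∂μ ≤ 2 := by
  have := h.isFiniteMeasure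
  calc ∫ ω, exp (X ω ^ 2 / t ^ 2) ∂μ
      = (√π)⁻¹ * ∫ x, mgf X μ (2 * x / t) * exp (-x ^ 2) := by
        simp_rw [exp_sq_div_sq_eq_integral _ ht.ne']
        rw [integral_const_mul, integral_integral_swap
          (h.integrable_prod_exp_mul_mul_exp_neg_sq ht hct)]
        simp_rw [integral_mul_const]
        rfl
    _ ≤ (√π)⁻¹ * ∫ x, exp (-(1 / 3) * x ^ 2) := by
        gcongr ?_ * ?_
        exact integral_mono (h.integrable_mgf_mul_exp_neg_sq ht hct)
          (integrable_exp_neg_mul_sq (by norm_num)) (h.mgf_mul_exp_neg_sq_le ht hct)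
    _ = √3 := by
        rw [integral_gaussian, div_div_eq_mul_div, div_one, sqrt_mul pi_pos.le,
          inv_mul_cancel_left₀ (by positivity)]
    _ ≤ 2 := by nlinarith [sq_sqrt (show (0 : ℝ) ≤ 3 by norm_num), sqrt_nonneg 3]

lemma subgNorm_le (h : HasSubgaussianMGF X c μ) : Trace.subgNorm μ X ≤ √(3 * c) :=
  le_of_forall_gt_imp_ge_of_dense fun _ ht =>
    csInf_le ⟨0, fun _ hs => hs.1.le⟩ ⟨(sqrt_nonneg _).trans_lt ht,
      h.integral_exp_sq_div_sq_le_two ((sqrt_nonneg _).trans_lt ht)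
        ((sqrt_lt' ((sqrt_nonneg _).trans_lt ht)).1 ht).le⟩

end ProbabilityTheory.HasSubgaussianMGF

namespace Trace

open Finset Metric
open scoped NNReal

lemma isProbabilityMeasure_signMeasure_s18 {m : ℝ} (hm : |m| ≤ 1) :
    IsProbabilityMeasure (signMeasure m) := by
  obtain ⟨hm₁, hm₂⟩ := abs_le.1 hm
  constructor
  simp only [signMeasure, Measure.coe_add, Measure.coe_smul, Pi.add_apply, Pi.smul_apply,
    measure_univ, smul_eq_mul, mul_one]
  rw [← ENNReal.ofReal_add (by linarith) (by linarith)]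
  ring_nf
  exact ENNReal.ofReal_one

lemma integral_signMeasure {m : ℝ} (hm : |m| ≤ 1) (f : Bool → ℝ) :
    ∫ b, f b ∂signMeasure m = (1 + m) / 2 * f true + (1 - m) / 2 * f false := by
  obtain ⟨hm₁, hm₂⟩ := abs_le.1 hm
  rw [signMeasure, integral_add_measure (Integrable.of_finite.smul_measure ENNReal.ofReal_ne_top)
    (Integrable.of_finite.smul_measure ENNReal.ofReal_ne_top), integral_smul_measure,
    integral_smul_measure, integral_dirac, integral_dirac, ENNReal.toReal_ofReal (by linarith),
    ENNReal.toReal_ofReal (by linarith), smul_eq_mul, smul_eq_mul]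

/-- Hoeffding's lemma for a sign of mean `m`, centred. -/
lemma two_point_mgf_le {m : ℝ} (hm : |m| ≤ 1) (a : ℝ) :
    (1 + m) / 2 * exp (a * (1 - m)) + (1 - m) / 2 * exp (a * (-1 - m)) ≤ exp (a ^ 2 / 2) := by
  have := isProbabilityMeasure_signMeasure_s18 hm
  let X : Bool → ℝ := fun b => (if b then 1 else -1) - m
  have hX : HasSubgaussianMGF X ((‖(1 - m) - (-1 - m)‖₊ / 2) ^ 2) (signMeasure m) := by
    refine hasSubgaussianMGF_of_mem_Icc_of_integral_eq_zero (measurable_of_finite X).aemeasurable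
      (ae_of_all _ fun b => ?_) ?_
    · cases b <;> simp [X]
    · rw [integral_signMeasure hm]
      simp only [X, if_true, Bool.false_eq_true, if_false]
      ring
  have hc : ((‖(1 - m) - (-1 - m)‖₊ / 2) ^ 2 : ℝ≥0) = 1 := by
    ext
    simp only [sub_sub_sub_cancel_right, sub_neg_eq_add, NNReal.coe_pow, NNReal.coe_div,
      coe_nnnorm]
    norm_num
  have h := hX.mgf_le a
  rw [hc, NNReal.coe_one, one_mul, mgf, integral_signMeasure hm] at h
  simpa [X] using h

variable {d k : ℕ}

lemma sparseZ_finite (d k : ℕ) : (SparseZ d k).Finite := by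
  refine (Set.Finite.pi (t := fun _ : Fin d => ({0, 1, -1} : Set ℝ))
    fun _ => Set.toFinite _).subset fun z hz i _ => ?_
  rcases hz.1 i with h | h | h <;> simp [h]

instance : Fintype (SparseZ d k) := (sparseZ_finite d k).fintype

def signPattern (J P : Finset (Fin d)) : Fin d → ℝ := fun i =>
  if i ∈ P then 1 else if i ∈ J then -1 else 0

lemma sparseSupport_signPattern {J P : Finset (Fin d)} (hPJ : P ⊆ J) :
    sparseSupport (signPattern J P) = J := by
  ext i
  rw [sparseSupport, mem_filter_univ, signPattern]
  split_ifs with hP hJ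
  · simp [hPJ hP]
  · simp [hJ]
  · simp [hJ]

lemma filter_signPattern_eq_one (J P : Finset (Fin d)) :
    univ.filter (fun i => signPattern J P i = 1) = P := by
  ext i
  rw [mem_filter_univ, signPattern]
  split_ifs <;> norm_num [*]

lemma signPattern_mem_sparseZ {J P : Finset (Fin d)} (hPJ : P ⊆ J) (hJ : #J = k) :
    signPattern J P ∈ SparseZ d k := by
  refine ⟨fun i => ?_, by rw [sparseSupport_signPattern hPJ, hJ]⟩
  unfold signPattern
  split_ifs <;> simp

lemma signPattern_sparseSupport (z : SparseZ d k) :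
    signPattern (sparseSupport z.1) (univ.filter fun i => z.1 i = 1) = z.1 := by
  funext i
  rcases z.2.1 i with h | h | h <;> norm_num [signPattern, sparseSupport, h]

/-- `z ↦ (supp z, {z = 1})` identifies `Z_k` with the pairs `P ⊆ J` with `#J = k`. -/
lemma sum_sparseZ_prod (g : Fin d → ℝ → ℝ) :
    ∑ z : SparseZ d k, ∏ j ∈ sparseSupport z.1, g j (z.1 j)
      = ∑ J ∈ univ.powersetCard k, ∏ j ∈ J, (g j 1 + g j (-1)) := by
  have hsplit : ∀ J : Finset (Fin d), ∏ j ∈ J, (g j 1 + g j (-1))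
      = ∑ P ∈ J.powerset, ∏ j ∈ J, g j (signPattern J P j) := by
    intro J
    rw [prod_add]
    refine sum_congr rfl fun P hP => ?_
    have hPJ := mem_powerset.1 hP
    rw [← union_sdiff_of_subset hPJ, prod_union disjoint_sdiff, union_sdiff_of_subset hPJ]
    congr 1
    · exact prod_congr rfl fun j hj => by simp [signPattern, hj]
    · exact prod_congr rfl fun j hj => by
        simp [signPattern, (mem_sdiff.1 hj).2, (mem_sdiff.1 hj).1]
  rw [sum_congr rfl fun J _ => hsplit J, sum_sigma']
  refine sum_bij' (fun z _ => ⟨sparseSupport z.1, univ.filter fun i => z.1 i = 1⟩)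
    (fun x hx => ⟨signPattern x.1 x.2, signPattern_mem_sparseZ
      (mem_powerset.1 (mem_sigma.1 hx).2) (mem_powersetCard.1 (mem_sigma.1 hx).1).2⟩)
    (fun z _ => ?_) (fun _ _ => mem_univ _) (fun z _ => Subtype.ext (signPattern_sparseSupport z))
    (fun x hx => ?_) (fun z _ => ?_)
  · refine mem_sigma.2 ⟨mem_powersetCard.2 ⟨subset_univ _, z.2.2⟩, mem_powerset.2 fun i hi => ?_⟩
    simp only [mem_filter, mem_univ, true_and] at hi
    simp [sparseSupport, hi]
  · have hPJ := mem_powerset.1 (mem_sigma.1 hx).2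
    simp only [sparseSupport_signPattern hPJ, filter_signPattern_eq_one]
  · rw [signPattern_sparseSupport]

variable {μ : Fin d → ℝ}

lemma abs_div_mul_le_one (hμ : ∀ j, |μ j| ≤ (k : ℝ) / d) (j : Fin d) :
    |(d : ℝ) / k * μ j| ≤ 1 :=
  calc |(d : ℝ) / k * μ j| = (d : ℝ) / k * |μ j| := by rw [abs_mul, abs_of_nonneg (by positivity)]
    _ ≤ (d : ℝ) / k * ((k : ℝ) / d) := by gcongr; exact hμ j
    _ ≤ 1 := by rw [div_mul_div_comm, mul_comm]; exact div_self_le_one _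

def sparseWeight (d k : ℕ) (μ : Fin d → ℝ) (z : SparseZ d k) : ℝ :=
  (d.choose k : ℝ)⁻¹ * ∏ j ∈ sparseSupport z.1, (1 + (d : ℝ) / k * μ j * z.1 j) / 2

lemma sparseWeight_nonneg (hμ : ∀ j, |μ j| ≤ (k : ℝ) / d) (z : SparseZ d k) :
    0 ≤ sparseWeight d k μ z := by
  refine mul_nonneg (by positivity) (prod_nonneg fun j _ => ?_)
  have hz : |z.1 j| ≤ 1 := by rcases z.2.1 j with h | h | h <;> simp [h]
  have := neg_abs_le ((d : ℝ) / k * μ j * z.1 j)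
  have := abs_mul ((d : ℝ) / k * μ j) (z.1 j) ▸
    mul_le_one₀ (abs_div_mul_le_one hμ j) (abs_nonneg _) hz
  linarith

instance : IsFiniteMeasure (sparseDist d k μ) :=
  ⟨by simp [sparseDist, ENNReal.sum_lt_top, ENNReal.mul_lt_top]⟩

lemma integral_sparseDist (hμ : ∀ j, |μ j| ≤ (k : ℝ) / d) (f : SparseZ d k → ℝ) :
    ∫ z, f z ∂sparseDist d k μ = ∑ z, sparseWeight d k μ z * f z := by
  rw [sparseDist, Measure.sum_fintype, integral_finsetSum_measure
    fun z _ => Integrable.of_finite.smul_measure ENNReal.ofReal_ne_top]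
  refine sum_congr rfl fun z _ => ?_
  rw [integral_smul_measure, integral_dirac, ← sparseWeight,
    ENNReal.toReal_ofReal (sparseWeight_nonneg hμ z), smul_eq_mul]

lemma mgf_sparsePhi_le (hkd : k ≤ d) (hμ : ∀ j, |μ j| ≤ (k : ℝ) / d) (v : Fin d → ℝ) (t : ℝ) :
    mgf (sparsePhi d k μ v) (sparseDist d k μ) t ≤ exp (k * ‖v‖ ^ 2 * t ^ 2 / 2) := by
  set m : Fin d → ℝ := fun j => (d : ℝ) / k * μ j
  let g : Fin d → ℝ → ℝ := fun j s => (1 + m j * s) / 2 * exp (t * v j * (s - m j))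
  have hterm : ∀ z : SparseZ d k, sparseWeight d k μ z * exp (t * sparsePhi d k μ v z)
      = (d.choose k : ℝ)⁻¹ * ∏ j ∈ sparseSupport z.1, g j (z.1 j) := by
    intro z
    rw [sparseWeight, sparsePhi, mul_sum, exp_sum, mul_assoc, ← prod_mul_distrib]
    congr 1
    refine prod_congr rfl fun j _ => ?_
    simp only [g, m]
    ring_nf
  have hpair_nonneg : ∀ j, 0 ≤ g j 1 + g j (-1) := by
    intro j
    have hm := abs_le.1 (abs_div_mul_le_one hμ j)
    exact add_nonneg (mul_nonneg (by simp only [m]; linarith) (exp_pos _).le)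
      (mul_nonneg (by simp only [m]; linarith) (exp_pos _).le)
  have hpair : ∀ j, g j 1 + g j (-1) ≤ exp (‖v‖ ^ 2 * t ^ 2 / 2) := by
    intro j
    calc g j 1 + g j (-1)
        = (1 + m j) / 2 * exp (t * v j * (1 - m j))
            + (1 - m j) / 2 * exp (t * v j * (-1 - m j)) := by
          simp only [g]
          ring_nf
      _ ≤ exp ((t * v j) ^ 2 / 2) := two_point_mgf_le (abs_div_mul_le_one hμ j) _
      _ ≤ exp (‖v‖ ^ 2 * t ^ 2 / 2) := by
          rw [mul_pow, mul_comm]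
          gcongr exp (?_ * _ / 2)
          exact sq_le_sq' (abs_le.1 (norm_le_pi_norm v j)).1 (abs_le.1 (norm_le_pi_norm v j)).2
  calc mgf (sparsePhi d k μ v) (sparseDist d k μ) t
      = (d.choose k : ℝ)⁻¹ * ∑ J ∈ univ.powersetCard k, ∏ j ∈ J, (g j 1 + g j (-1)) := by
        rw [mgf, integral_sparseDist hμ, ← sum_sparseZ_prod, mul_sum]
        exact sum_congr rfl fun z _ => hterm z
    _ ≤ (d.choose k : ℝ)⁻¹ * ∑ J ∈ univ.powersetCard k, exp (‖v‖ ^ 2 * t ^ 2 / 2) ^ k := by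
        gcongr with J hJ
        rw [← (mem_powersetCard.1 hJ).2, ← prod_const]
        exact prod_le_prod (fun j _ => hpair_nonneg j) fun j _ => hpair j
    _ = exp (k * ‖v‖ ^ 2 * t ^ 2 / 2) := by
        rw [sum_const, card_powersetCard, card_univ, Fintype.card_fin, nsmul_eq_mul,
          inv_mul_cancel_left₀ (by exact_mod_cast (Nat.choose_pos hkd).ne'), ← exp_nat_mul]
        ring_nf

lemma hasSubgaussianMGF_sparsePhi (hkd : k ≤ d) (hμ : ∀ j, |μ j| ≤ (k : ℝ) / d)
    (v : Fin d → ℝ) :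
    HasSubgaussianMGF (sparsePhi d k μ v) (k * ‖v‖₊ ^ 2) (sparseDist d k μ) where
  integrable_exp_mul _ := .of_finite
  mgf_le t := by
    push_cast
    exact mgf_sparsePhi_le hkd hμ v t

lemma subgNorm_mul_sparsePhi_le (hkd : k ≤ d) (hμ : ∀ j, |μ j| ≤ (k : ℝ) / d)
    (a : ℝ) (v : Fin d → ℝ) :
    subgNorm (sparseDist d k μ) (fun z => a / √k * sparsePhi d k μ v z) ≤ √3 * |a| * ‖v‖ := by
  have hc : (a / √k) ^ 2 * (k * ‖v‖ ^ 2) ≤ a ^ 2 * ‖v‖ ^ 2 := by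
    rw [div_pow, sq_sqrt (Nat.cast_nonneg k), ← mul_assoc, div_mul_eq_mul_div, mul_div_assoc]
    gcongr
    exact mul_le_of_le_one_right (sq_nonneg a) (div_self_le_one _)
  calc subgNorm (sparseDist d k μ) (fun z => a / √k * sparsePhi d k μ v z)
      ≤ √(3 * (a ^ 2 * ‖v‖ ^ 2)) :=
        ((hasSubgaussianMGF_sparsePhi hkd hμ v).const_mul _).subgNorm_le.trans
          (sqrt_le_sqrt (mul_le_mul_of_nonneg_left hc (by norm_num)))
    _ = √3 * |a| * ‖v‖ := by
        rw [sqrt_mul (by norm_num), sqrt_mul (sq_nonneg a), sqrt_sq_eq_abs,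
          sqrt_sq (norm_nonneg v), mul_assoc]

lemma sparsePhi_sub (θ θ' : Fin d → ℝ) (z : SparseZ d k) :
    sparsePhi d k μ θ z - sparsePhi d k μ θ' z = sparsePhi d k μ (θ - θ') z := by
  simp only [sparsePhi, ← sum_sub_distrib, Pi.sub_apply, sub_mul]

lemma linftyBall_eq_closedBall {r : ℝ} (hr : 0 ≤ r) :
    {θ : Fin d → ℝ | ∀ i, |θ i| ≤ r} = closedBall 0 r := by
  ext θ
  simp [pi_norm_le_iff_of_nonneg hr]

lemma minkowskiNorm_closedBall {r : ℝ} (hr : 0 ≤ r) :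
    minkowskiNorm (closedBall (0 : Fin d → ℝ) r) = fun x => ‖x‖ / r := by
  funext x
  rw [minkowskiNorm, Set.image_neg_eq_neg, neg_closedBall, neg_zero, Set.union_self,
    (convex_closedBall 0 r).convexHull_eq, gauge_closedBall hr]

lemma le_normDiam {N : (Fin d → ℝ) → ℝ} {T : Set (Fin d → ℝ)} {M : ℝ}
    (hM : ∀ x ∈ T, ∀ y ∈ T, N (x - y) ≤ M) {x y : Fin d → ℝ} (hx : x ∈ T) (hy : y ∈ T) :
    N (x - y) ≤ normDiam N T := by
  have : Nonempty T := ⟨⟨x, hx⟩⟩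
  refine le_ciSup_of_le ⟨M, ?_⟩ ⟨x, hx⟩ (le_ciSup (f := fun y' : T => N (x - y')) ⟨M, ?_⟩ ⟨y, hy⟩)
  · rintro _ ⟨x', rfl⟩
    exact ciSup_le fun y' => hM _ x'.2 _ y'.2
  · rintro _ ⟨y', rfl⟩
    exact hM _ hx _ y'.2

end Trace

open MeasureTheory ProbabilityTheory in
/-- Lemma `lemma:lp-subg-tracer`: the fingerprinting score induces a
`C`-subgaussian process w.r.t. the Minkowski norm of `Θ = B_∞(d^{-1/p})`. -/
theorem sparsePhi_subgaussian_process :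
    ∃ C > (0 : ℝ),
      ∀ (d k : ℕ), 1 ≤ k → k ≤ d →
        ∀ p : ℝ, 1 ≤ p →
          ∀ μ : Fin d → ℝ, (∀ j, |μ j| ≤ (k : ℝ) / d) →
            Trace.IsSubgaussianProcess (Trace.sparseDist d k μ)
              {θ : Fin d → ℝ | ∀ i, |θ i| ≤ (d : ℝ) ^ (-(1 : ℝ) / p)}
              (Trace.minkowskiNorm {θ : Fin d → ℝ | ∀ i, |θ i| ≤ (d : ℝ) ^ (-(1 : ℝ) / p)})
              (fun θ z => (d : ℝ) ^ ((1 : ℝ) / p) / Real.sqrt k *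
                Trace.sparsePhi d k μ θ z) C := by
  refine ⟨√3, by positivity, fun d k hk hkd p _ μ hμ => ?_⟩
  have hd : (0 : ℝ) < d := by exact_mod_cast hk.trans hkd
  have hdr : |(d : ℝ) ^ ((1 : ℝ) / p)| = ((d : ℝ) ^ (-(1 : ℝ) / p))⁻¹ := by
    rw [abs_of_pos (rpow_pos_of_pos hd _), neg_div, rpow_neg hd.le, inv_inv]
  set r := (d : ℝ) ^ (-(1 : ℝ) / p)
  have hr : 0 < r := rpow_pos_of_pos hd _
  rw [Trace.linftyBall_eq_closedBall hr.le, Trace.minkowskiNorm_closedBall hr.le]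
  have hφ : ∀ v, Trace.subgNorm (Trace.sparseDist d k μ)
      (fun z => (d : ℝ) ^ ((1 : ℝ) / p) / √k * Trace.sparsePhi d k μ v z) ≤ √3 * (‖v‖ / r) :=
    fun v => (Trace.subgNorm_mul_sparsePhi_le hkd hμ _ v).trans_eq (by rw [hdr]; ring)
  have hdiam : ∀ x ∈ Metric.closedBall (0 : Fin d → ℝ) r, ∀ y ∈ Metric.closedBall 0 r,
      ‖x - y‖ / r ≤ 2 := by
    intro x hx y hy
    rw [mem_closedBall_zero_iff] at hx hy
    rw [div_le_iff₀ hr]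
    linarith [norm_sub_le x y]
  refine ⟨fun θ _ θ' _ => ?_, fun θ hθ => ?_⟩
  · simpa only [← mul_sub, Trace.sparsePhi_sub] using hφ (θ - θ')
  · calc _ ≤ √3 * (‖θ‖ / r) := hφ θ
      _ ≤ √3 * (‖θ - -θ‖ / r) := by
        rw [sub_neg_eq_add, ← two_smul ℝ θ, norm_smul, Real.norm_two]
        gcongr
        linarith [norm_nonneg θ]
      _ ≤ _ := by
        gcongr
        exact Trace.le_normDiam (N := fun x => ‖x‖ / r) hdiam hθ (by simpa using hθ)
end
end

section
/- Fix n ∈ ℕ, ε > 0 and δ ∈ [0,1). Let A_n be a learning algorithm that is (ε,δ)-differentially private. Then, if A_n is (ξ,m)-traceable, it holds that m ≤ n·exp(ε)·ξ + n·δ. -/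
open MeasureTheory ProbabilityTheory

noncomputable section

/-!
Let `Z₀` be the fresh sample and `Z₁, …, Zₙ` the training set. Exchanging `Z₀` and `Zᵢ` preserves
the law of the data but changes the training set in one entry only, so differential privacy gives
`P(φ(θ̂, Zᵢ) ≥ λ) ≤ e^ε P(φ(θ̂, Z₀) ≥ λ) + δ ≤ e^ε ξ + δ`. Summing over `i` bounds the expected
number of traced training points, which is at least `m`.
-/

lemma integral_comp_perm {Z ι E : Type*} [MeasurableSpace Z] [Fintype ι] [NormedAddCommGroup E]
    [NormedSpace ℝ E] (μ : Measure Z) [SigmaFinite μ] (σ : Equiv.Perm ι) (f : (ι → Z) → E) :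
    ∫ zs, f (zs ∘ σ) ∂Measure.pi (fun _ => μ) = ∫ zs, f zs ∂Measure.pi (fun _ => μ) :=
  (measurePreserving_arrowCongr' (fun _ => μ) (fun _ => μ) σ.symm (MeasurableEquiv.refl Z)
    fun _ => MeasurePreserving.id μ).integral_comp' f

lemma integral_card_filter_eq_sum_measureReal {α ι : Type*} [MeasurableSpace α] [Fintype ι]
    (μ : Measure α) [IsFiniteMeasure μ] (p : ι → α → Prop) [∀ i x, Decidable (p i x)]
    (hp : ∀ i, MeasurableSet {x | p i x}) :
    ∫ x, ((Finset.univ.filter fun i => p i x).card : ℝ) ∂μ = ∑ i, μ.real {x | p i x} := by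
  have h_indicator (x : α) :
      ((Finset.univ.filter fun i => p i x).card : ℝ) = ∑ i, Set.indicator {x | p i x} 1 x := by
    rw [Finset.card_filter]
    push_cast
    simp only [Set.indicator_apply, Set.mem_ofPred_eq, Pi.one_apply]
  simp_rw [h_indicator]
  rw [integral_finsetSum _ fun i _ => (integrable_const 1).indicator (hp i)]
  exact Finset.sum_congr rfl fun i _ => integral_indicator_one (hp i)

namespace Trace

section Tracing

variable {Z : Type*} [MeasurableSpace Z] {d n : ℕ}

@[fun_prop]
lemma measurable_fin_tail : Measurable (Fin.tail : (Fin (n + 1) → Z) → Fin n → Z) :=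
  measurable_pi_lambda _ fun i => measurable_pi_apply i.succ

lemma traceMeasure_eq_compProd (D : Measure Z) [SigmaFinite D]
    (K : Kernel (Fin n → Z) (Fin d → ℝ)) [IsSFiniteKernel K] :
    traceMeasure D K = Measure.pi (fun _ => D) ⊗ₘ K.comap Fin.tail (by fun_prop) := by
  ext s hs
  have h_map : Measurable fun zs : Fin (n + 1) → Z => (K (Fin.tail zs)).map (Prod.mk zs) := by
    refine Measure.measurable_of_measurable_coe _ fun t ht => ?_
    simp_rw [Measure.map_apply measurable_prodMk_left ht]
    exact (K.comap Fin.tail (by fun_prop)).measurable_kernel_prodMk_left ht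
  rw [Measure.compProd_apply hs]
  exact (Measure.bind_apply hs h_map.aemeasurable).trans
    (lintegral_congr fun zs => Measure.map_apply measurable_prodMk_left hs)

instance (D : Measure Z) [IsProbabilityMeasure D]
    (K : Kernel (Fin n → Z) (Fin d → ℝ)) [IsMarkovKernel K] :
    IsProbabilityMeasure (traceMeasure D K) := by
  rw [traceMeasure_eq_compProd]
  infer_instance

lemma measureReal_traceMeasure (D : Measure Z) [IsProbabilityMeasure D]
    (K : Kernel (Fin n → Z) (Fin d → ℝ)) [IsMarkovKernel K] {s : Set _} (hs : MeasurableSet s) :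
    (traceMeasure D K).real s =
      ∫ zs, (K (Fin.tail zs)).real (Prod.mk zs ⁻¹' s) ∂(Measure.pi fun _ => D) := by
  rw [measureReal_def, traceMeasure_eq_compProd, Measure.compProd_apply hs,
    ← integral_toReal ((K.comap Fin.tail (by fun_prop)).measurable_kernel_prodMk_left hs).aemeasurable
      (ae_of_all _ fun _ => measure_lt_top _ _)]
  rfl

lemma IsDP.measureReal_traceMeasure_succ_le {ε δ : ℝ} {K : Kernel (Fin n → Z) (Fin d → ℝ)}
    [IsMarkovKernel K] (hK : IsDP K ε δ) (D : Measure Z) [IsProbabilityMeasure D]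
    {T : Set ((Fin d → ℝ) × Z)} (hT : MeasurableSet T) (i : Fin n) :
    (traceMeasure D K).real {x | (x.2, x.1 i.succ) ∈ T} ≤
      Real.exp ε * (traceMeasure D K).real {x | (x.2, x.1 0) ∈ T} + δ := by
  have h_meas (j : Fin (n + 1)) : MeasurableSet {x : (Fin (n + 1) → Z) × _ | (x.2, x.1 j) ∈ T} :=
    hT.preimage (by fun_prop)
  set σ := Equiv.swap 0 i.succ
  set g : (Fin (n + 1) → Z) → ℝ := fun zs => (K (Fin.tail zs)).real {θ | (θ, zs 0) ∈ T}
  have hg_int : Integrable g (Measure.pi fun _ => D) := by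
    refine .of_bound (C := 1) ?_ (ae_of_all _ fun zs => ?_)
    · exact ((K.comap Fin.tail (by fun_prop)).measurable_kernel_prodMk_left
        (h_meas 0)).ennreal_toReal.aestronglyMeasurable
    · rw [Real.norm_eq_abs, abs_of_nonneg measureReal_nonneg]
      exact measureReal_le_one
  have h_succ : (traceMeasure D K).real {x | (x.2, x.1 i.succ) ∈ T} =
      ∫ zs, (K (Fin.tail (zs ∘ σ))).real {θ | (θ, zs 0) ∈ T} ∂(Measure.pi fun _ => D) := by
    rw [measureReal_traceMeasure D K (h_meas _), ← integral_comp_perm D σ]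
    simp [σ]
  have h_adjacent (zs : Fin (n + 1) → Z) : ∀ j, j ≠ i → Fin.tail (zs ∘ σ) j = Fin.tail zs j :=
    fun j hj => congrArg zs (Equiv.swap_apply_of_ne_of_ne (Fin.succ_ne_zero j)
      (Fin.succ_injective _ |>.ne hj))
  rw [h_succ, measureReal_traceMeasure D K (h_meas 0)]
  calc ∫ zs, (K (Fin.tail (zs ∘ σ))).real {θ | (θ, zs 0) ∈ T} ∂(Measure.pi fun _ => D)
      ≤ ∫ zs, (Real.exp ε * g zs + δ) ∂(Measure.pi fun _ => D) :=
        integral_mono_of_nonneg (ae_of_all _ fun _ => measureReal_nonneg)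
          ((hg_int.const_mul _).add (integrable_const δ))
          (ae_of_all _ fun zs => hK _ _ ⟨i, h_adjacent zs⟩ _ (measurable_prodMk_right hT))
    _ = Real.exp ε * ∫ zs, g zs ∂(Measure.pi fun _ => D) + δ := by
        rw [integral_add (hg_int.const_mul _) (integrable_const δ), integral_const_mul,
          integral_const, probReal_univ, one_smul]

end Tracing

end Trace

open MeasureTheory ProbabilityTheory in
theorem dp_implies_not_traceable_general (Z : Type) [MeasurableSpace Z] (d n : ℕ)
    (ε δ : ℝ)
    (K : Kernel (Fin n → Z) (Fin d → ℝ)) (hK : IsMarkovKernel K)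
    (hDP : Trace.IsDP K ε δ) (ξ m : ℝ) (hT : Trace.IsTraceable K ξ m) :
    m ≤ n * Real.exp ε * ξ + n * δ := by
  obtain ⟨φ, D, lam, hD, hφ, hsound, hrecall⟩ := hT
  have h_score : MeasurableSet {q : (Fin d → ℝ) × Z | lam ≤ Function.uncurry φ q} :=
    measurableSet_le measurable_const hφ
  calc m ≤ _ := hrecall
    _ = ∑ i : Fin n, (Trace.traceMeasure D K).real {x | lam ≤ φ x.2 (x.1 i.succ)} :=
        integral_card_filter_eq_sum_measureReal _ _ fun i =>
          h_score.preimage (f := fun x : (Fin (n + 1) → Z) × _ => (x.2, x.1 i.succ)) (by fun_prop)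
    _ ≤ ∑ _i : Fin n, (Real.exp ε * ξ + δ) := Finset.sum_le_sum fun i _ =>
        (hDP.measureReal_traceMeasure_succ_le D h_score i).trans (by gcongr; exact hsound)
    _ = n * Real.exp ε * ξ + n * δ := by
        rw [Finset.sum_const, Finset.card_univ, Fintype.card_fin, nsmul_eq_mul]
        ring

open MeasureTheory ProbabilityTheory in
/-- Proposition `prop:dp-no-traceable`: differentially private
algorithms are not traceable. -/
theorem dp_implies_not_traceable (Z : Type) [MeasurableSpace Z] (d n : ℕ)
    (ε δ : ℝ) (hε : 0 < ε) (hδ0 : 0 ≤ δ) (hδ1 : δ < 1)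
    (K : Kernel (Fin n → Z) (Fin d → ℝ)) (hK : IsMarkovKernel K)
    (hDP : Trace.IsDP K ε δ) (ξ m : ℝ) (hT : Trace.IsTraceable K ξ m) :
    m ≤ n * Real.exp ε * ξ + n * δ :=
  dp_implies_not_traceable_general Z d n ε δ K hK hDP ξ m hT
end
end
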